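/- arXiv:2205.08504 — 2 statements merged into one kernel-verified Lean document; each statement's English description precedes it below -/
import Mathlib

section
/- Let w, v ∈ ℂ with Re(w) ≤ 1. Then as real n → ∞, S_n(w;v) = 1 + n w ∫_{1/2}^{1} e^{n·p(w;z)} z^v dz + O(2^{−n/20}), for an implied constant depending only on w and v. -/
open Filter Asymptotics MeasureTheory

/-- De Moivre polynomial `A_{n,k}(a_1, a_2, ...)`: the coefficient of `x^n` in
`(a_1 x + a_2 x^2 + ...)^k`. Here `a : ℕ → ℂ` with `a i` playing the role of `a_i` for `i ≥ 1`. -/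
noncomputable def dmPoly (a : ℕ → ℂ) (n k : ℕ) : ℂ :=
  PowerSeries.coeff (R := ℂ) n ((PowerSeries.mk fun i => if i = 0 then 0 else a i) ^ k)

/-- Generalized binomial coefficient `binom(v, m) = v(v-1)⋯(v-m+1)/m!`. -/
noncomputable def cbinom (v : ℂ) (m : ℕ) : ℂ :=
  (∏ i ∈ Finset.range m, (v - i)) / (Nat.factorial m)

/-- `S_n(w; v) = 1 + n w ∫₀¹ e^{n (w(1-z) + log z)} z^v dz`. -/
noncomputable def Sfun (n : ℝ) (w v : ℂ) : ℂ :=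
  1 + (n : ℂ) * w *
    ∫ z in (0:ℝ)..1, Complex.exp ((n : ℂ) * (w * (1 - (z:ℂ)) + (Real.log z : ℂ))) * (z:ℂ) ^ v

/-- `T_n(w; v) = e^{n w} (n w)^{-(n+v)} Γ(n+v+1) - S_n(w; v)`, with
`(n w)^{n+v} = e^{(n+v)(log n + Log w)}` (principal logarithm). -/
noncomputable def Tfun (n : ℝ) (w v : ℂ) : ℂ :=
  Complex.exp ((n : ℂ) * w) *
    Complex.exp (-(((n : ℂ) + v) * ((Real.log n : ℂ) + Complex.log w))) *
    Complex.Gamma ((n : ℂ) + v + 1) - Sfun n w v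

/-- `γ_r(v)`. -/
noncomputable def gamCoeff (v : ℂ) (r : ℕ) : ℂ :=
  ∑ m ∈ Finset.range (2*r+1), (-1)^m * cbinom v (2*r - m) *
    ∑ k ∈ Finset.range (m+1),
      (Nat.doubleFactorial (2*r+2*k-1) : ℂ) / ((-1)^k * (Nat.factorial k : ℂ)) *
        dmPoly (fun j => 1 / ((j:ℂ) + 2)) m k

/-- `ρ_r(v)`. -/
noncomputable def rhoCoeff (v : ℂ) (r : ℕ) : ℂ :=
  (if r = 0 then 1 else 0) -
    ∑ m ∈ Finset.range (2*r+2), (-1)^m * cbinom v (2*r+1-m) *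
      ∑ k ∈ Finset.range (m+1),
        (Nat.doubleFactorial (2*r+2*k) : ℂ) / ((-1)^k * (Nat.factorial k : ℂ)) *
          dmPoly (fun j => 1 / ((j:ℂ) + 2)) m k

/-- `U_r(w; v)`. -/
noncomputable def UCoeff (w v : ℂ) (r : ℕ) : ℂ :=
  (if r = 0 then 1 else 0) -
    ∑ m ∈ Finset.range (r+1), (-1)^m * cbinom v (r-m) *
      ∑ k ∈ Finset.range (m+1),
        w / (w-1)^(r+k+1) * ((Nat.factorial (r+k) : ℂ) / (Nat.factorial k : ℂ)) *
          dmPoly (fun j => 1 / ((j:ℂ) + 1)) m k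

/-- Lemma 3.2, first part. For `Re(w) ≤ 1`,
`S_n(w;v) = 1 + nw ∫_{1/2}^1 e^{n·p(w;z)} z^v dz + O(2^{-n/20})` as real `n → ∞`. -/
theorem Sfun_truncated_integral (w v : ℂ) (hw : w.re ≤ 1) :
    (fun n : ℝ => Sfun n w v -
        (1 + (n:ℂ) * w *
          ∫ z in (1/2:ℝ)..1,
            Complex.exp ((n:ℂ) * (w * (1 - (z:ℂ)) + (Real.log z : ℂ))) * (z:ℂ) ^ v))
      =O[atTop] (fun n : ℝ => (2:ℝ) ^ (-n / 20)) := by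
  classical
  set g : ℝ → ℝ → ℂ := fun n z =>
    Complex.exp ((n:ℂ) * (w * (1 - (z:ℂ)) + (Real.log z : ℂ))) * (z:ℂ) ^ v with hg
  set c : ℝ := Real.exp (1/2) / 2 with hc
  have hcpos : 0 < c := by positivity
  set K : ℝ := max 1 (1 - v.re) with hKdef
  have hK1 : 1 ≤ K := le_max_left _ _
  have hKv : 1 ≤ K + v.re := by
    have := le_max_right 1 (1 - v.re); linarith
  -- continuity away from 0
  have hcont : ∀ n : ℝ, ∀ z : ℝ, 0 < z → ContinuousAt (g n) z := by
    intro n z hz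
    have hlog : ContinuousAt (fun z : ℝ => ((Real.log z : ℝ) : ℂ)) z :=
      Complex.continuous_ofReal.continuousAt.comp (Real.continuousAt_log hz.ne')
    have h1 : ContinuousAt
        (fun z : ℝ => Complex.exp ((n:ℂ) * (w * (1 - (z:ℂ)) + (Real.log z : ℂ)))) z :=
      Complex.continuous_exp.continuousAt.comp
        (continuousAt_const.mul
          ((continuousAt_const.mul
            (continuousAt_const.sub Complex.continuous_ofReal.continuousAt)).add hlog))
    have h2 : ContinuousAt (fun z : ℝ => (z:ℂ) ^ v) z :=
      (continuousAt_cpow_const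
          (by simp only [Complex.mem_slitPlane_iff, Complex.ofReal_re, Complex.ofReal_im]
              exact Or.inl hz)).comp
        Complex.continuous_ofReal.continuousAt
    exact h1.mul h2
  -- key pointwise bound
  have key : ∀ n : ℝ, K ≤ n → ∀ z : ℝ, z ∈ Set.Ioc (0:ℝ) (1/2) →
      ‖g n z‖ ≤ Real.exp K * c ^ (n - K) := by
    intro n hn z hz
    obtain ⟨hz0, hz2⟩ := hz
    have hn0 : (0:ℝ) ≤ n := by linarith
    have hre : ((n:ℂ) * (w * (1 - (z:ℂ)) + (Real.log z : ℂ))).re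
        = n * (w.re * (1 - z) + Real.log z) := by
      simp [Complex.mul_re, Complex.mul_im, Complex.add_re, Complex.sub_re, Complex.one_re,
        Complex.one_im, Complex.sub_im, Complex.add_im, Complex.ofReal_re, Complex.ofReal_im]
    have hnorm : ‖g n z‖ = Real.exp (n * (w.re * (1 - z) + Real.log z)) * z ^ v.re := by
      rw [hg]
      rw [norm_mul, Complex.norm_exp,
        Complex.norm_cpow_eq_rpow_re_of_pos hz0, hre]
    rw [hnorm]
    set E : ℝ := Real.exp (1 - z) with hE
    have hEpos : 0 < E := Real.exp_pos _
    have step1 : Real.exp (n * (w.re * (1 - z) + Real.log z)) * z ^ v.re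
        ≤ E ^ n * z ^ (n + v.re) := by
      have e1 : Real.exp (n * (w.re * (1 - z) + Real.log z))
          = Real.exp (n * (w.re * (1 - z))) * z ^ n := by
        rw [mul_add, Real.exp_add, Real.rpow_def_of_pos hz0]
        ring_nf
      rw [e1, Real.rpow_add hz0, hE, ← Real.exp_mul]
      have h1 : n * (w.re * (1 - z)) ≤ (1 - z) * n := by
        nlinarith [mul_nonneg (mul_nonneg hn0 (show (0:ℝ) ≤ 1 - z by linarith))
          (show (0:ℝ) ≤ 1 - w.re by linarith)]
      have := Real.exp_le_exp.2 h1
      have hzv : (0:ℝ) ≤ z ^ v.re := (Real.rpow_pos_of_pos hz0 _).le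
      have hzn : (0:ℝ) ≤ z ^ n := (Real.rpow_pos_of_pos hz0 _).le
      nlinarith [mul_le_mul_of_nonneg_right this (mul_nonneg hzn hzv)]
    have step2 : E ^ n * z ^ (n + v.re)
        = (E ^ K * z ^ (K + v.re)) * (E * z) ^ (n - K) := by
      rw [Real.mul_rpow hEpos.le hz0.le]
      rw [show (n : ℝ) = K + (n - K) by ring, Real.rpow_add hEpos,
        show K + (n - K) + v.re = (K + v.re) + (n - K) by ring, Real.rpow_add hz0]
      ring
    have step3 : E ^ K ≤ Real.exp K := by
      rw [hE, ← Real.exp_mul]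
      exact Real.exp_le_exp.2 (by nlinarith)
    have step4 : z ^ (K + v.re) ≤ 1 :=
      Real.rpow_le_one hz0.le (by linarith) (by linarith)
    have step5 : (E * z) ^ (n - K) ≤ c ^ (n - K) := by
      have h2z : z ≤ Real.exp (z - 1/2) / 2 := by
        nlinarith [Real.add_one_le_exp (z - 1/2)]
      have hEz : E * z ≤ c := by
        calc E * z ≤ E * (Real.exp (z - 1/2) / 2) :=
              mul_le_mul_of_nonneg_left h2z hEpos.le
          _ = c := by
              rw [hE, hc, mul_div_assoc', ← Real.exp_add]
              norm_num
      exact Real.rpow_le_rpow (by positivity) hEz (by linarith)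
    calc Real.exp (n * (w.re * (1 - z) + Real.log z)) * z ^ v.re
        ≤ E ^ n * z ^ (n + v.re) := step1
      _ = (E ^ K * z ^ (K + v.re)) * (E * z) ^ (n - K) := step2
      _ ≤ (Real.exp K * 1) * c ^ (n - K) := by
          have h1 : (0:ℝ) ≤ (E * z) ^ (n - K) := Real.rpow_nonneg (by positivity) _
          have h2 : (0:ℝ) ≤ E ^ K := (Real.rpow_pos_of_pos hEpos _).le
          have h3 : (0:ℝ) ≤ z ^ (K + v.re) := (Real.rpow_pos_of_pos hz0 _).le
          have h4 : E ^ K * z ^ (K + v.re) ≤ Real.exp K * 1 := by nlinarith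
          exact mul_le_mul h4 step5 h1 (by positivity)
      _ = Real.exp K * c ^ (n - K) := by ring
  -- Step 1 : big-O against n * c^n
  have hO1 : (fun n : ℝ => Sfun n w v -
        (1 + (n:ℂ) * w * ∫ z in (1/2:ℝ)..1, g n z))
      =O[atTop] (fun n : ℝ => n * c ^ n) := by
    rw [isBigO_iff]
    refine ⟨‖w‖ * Real.exp K / (2 * c ^ K), ?_⟩
    filter_upwards [eventually_ge_atTop K] with n hnK
    have hn0 : (0:ℝ) ≤ n := by linarith
    -- integrability on [0, 1/2]
    have int1 : IntervalIntegrable (g n) volume 0 (1/2) := by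
      rw [intervalIntegrable_iff, Set.uIoc_of_le (by norm_num : (0:ℝ) ≤ 1/2)]
      refine Integrable.mono' (g := fun _ : ℝ => Real.exp K * c ^ (n - K))
        (integrableOn_const measure_Ioc_lt_top.ne)
        ((ContinuousOn.aestronglyMeasurable (fun z hz => (hcont n z hz.1).continuousWithinAt)
          measurableSet_Ioc)) ?_
      filter_upwards [ae_restrict_mem measurableSet_Ioc] with z hz
      exact key n hnK z hz
    have int2 : IntervalIntegrable (g n) volume (1/2) 1 := by
      apply ContinuousOn.intervalIntegrable
      intro z hz
      rw [Set.uIcc_of_le (by norm_num : (1/2:ℝ) ≤ 1)] at hz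
      exact (hcont n z (by linarith [hz.1])).continuousWithinAt
    have heq : Sfun n w v - (1 + (n:ℂ) * w * ∫ z in (1/2:ℝ)..1, g n z)
        = (n:ℂ) * w * ∫ z in (0:ℝ)..(1/2:ℝ), g n z := by
      rw [Sfun, ← intervalIntegral.integral_add_adjacent_intervals int1 int2]
      ring
    rw [heq]
    have hIbd : ‖∫ z in (0:ℝ)..(1/2:ℝ), g n z‖ ≤ (Real.exp K * c ^ (n - K)) * |1/2 - 0| := by
      apply intervalIntegral.norm_integral_le_of_norm_le_const
      intro x hx
      rw [Set.uIoc_of_le (by norm_num : (0:ℝ) ≤ 1/2)] at hx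
      exact key n hnK x hx
    have hcK : (0:ℝ) < c ^ K := Real.rpow_pos_of_pos hcpos _
    have hcn : (0:ℝ) < c ^ n := Real.rpow_pos_of_pos hcpos _
    have hsub : c ^ (n - K) = c ^ n / c ^ K := Real.rpow_sub hcpos _ _
    rw [norm_mul, norm_mul, Complex.norm_real, Real.norm_eq_abs, abs_of_nonneg hn0,
      Real.norm_eq_abs, abs_of_nonneg (by positivity : (0:ℝ) ≤ n * c ^ n)]
    calc n * ‖w‖ * ‖∫ z in (0:ℝ)..(1/2:ℝ), g n z‖
        ≤ n * ‖w‖ * ((Real.exp K * c ^ (n - K)) * |1/2 - 0|) := by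
          have : (0:ℝ) ≤ n * ‖w‖ := by positivity
          exact mul_le_mul_of_nonneg_left hIbd this
      _ = ‖w‖ * Real.exp K / (2 * c ^ K) * (n * c ^ n) := by
          rw [hsub]
          rw [abs_of_nonneg (by norm_num : (0:ℝ) ≤ (1:ℝ)/2 - 0)]
          field_simp
          ring
  -- Step 2 : n * c^n = o(2^(-n/20))
  have hO2 : (fun n : ℝ => n * c ^ n) =o[atTop] (fun n : ℝ => (2:ℝ) ^ (-n / 20)) := by
    have hne : ∀ x : ℝ, (2:ℝ) ^ (-x / 20) = 0 → x * c ^ x = 0 := fun x hx =>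
      absurd hx (Real.rpow_pos_of_pos two_pos _).ne'
    rw [isLittleO_iff_tendsto hne]
    set s : ℝ := Real.log c + Real.log 2 / 20 with hs
    have hlogc : Real.log c = 1/2 - Real.log 2 := by
      rw [hc, Real.log_div (Real.exp_ne_zero _) two_ne_zero, Real.log_exp]
    have hsneg : s < 0 := by
      have h2 := Real.log_two_gt_d9
      rw [hs, hlogc]; nlinarith
    have heqf : ∀ x : ℝ, x * c ^ x / (2:ℝ) ^ (-x / 20) = x * Real.exp (s * x) := by
      intro x
      rw [Real.rpow_def_of_pos hcpos, Real.rpow_def_of_pos two_pos, mul_div_assoc,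
        ← Real.exp_sub]
      congr 1
      rw [hs]; ring
    have h0 := Real.tendsto_pow_mul_exp_neg_atTop_nhds_zero 1
    have h1 : Tendsto (fun x : ℝ => (-s) * x) atTop atTop :=
      tendsto_id.const_mul_atTop (by linarith)
    have h2 := (h0.comp h1).const_mul ((-s)⁻¹)
    rw [mul_zero] at h2
    refine Tendsto.congr (fun x => ?_) h2
    rw [heqf]
    have hsne : s ≠ 0 := hsneg.ne
    simp only [Function.comp_apply, pow_one]
    rw [show -(-s * x) = s * x by ring]
    field_simp
  exact hO1.trans hO2.isBigO
end

section
/- For all integers n ≥ 0 and k ≥ 0: (i) A_{n,k}(1/2!, 1/3!, 1/4!, …) = Σ over j_1,j_2,j_3 ≥ 0 with j_1+j_2+j_3 = k of (k!/(j_1! j_2! j_3!)) (−1)^{j_1+j_2} j_3^{n+j_1+j_3}/(n+j_1+j_3)!; and (ii) A_{n,k}(1/3!, 1/4!, 1/5!, …) = Σ over j_1,j_2,j_3,j_4 ≥ 0 with j_1+j_2+j_3+j_4 = k of (k!/(j_1! j_2! j_3! j_4!)) ((−1)^{j_1+j_2+j_3}/2^{j_3}) j_4^{n+2j_1+j_2+2j_4}/(n+2j_1+j_2+2j_4)!.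 -/
open Filter Asymptotics MeasureTheory

section DMHelpers
open PowerSeries

lemma aux_coeff_exp_pow (c d : ℕ) : coeff (R := ℂ) d (exp ℂ ^ c) = (c:ℂ)^d / d.factorial := by
  rw [exp_pow_eq_rescale_exp, coeff_rescale, coeff_exp]
  push_cast
  ring

lemma aux_coeff (c j d : ℕ) : coeff (R := ℂ) (d + j) (exp ℂ ^ c * X ^ j) = (c:ℂ)^d / d.factorial := by
  rw [coeff_mul_X_pow, aux_coeff_exp_pow]

lemma aux_mk1 :
    (PowerSeries.mk fun i => if i = 0 then (0:ℂ) else (1 / (Nat.factorial (i+1) : ℂ))) * X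
      = exp ℂ - 1 - X := by
  ext n
  rcases n with _ | n
  · simp [coeff_exp]
  · rw [coeff_succ_mul_X]
    rcases n with _ | n
    · simp [coeff_exp]
    · simp [coeff_exp, coeff_one, coeff_X]


lemma aux_coeff' (c j N : ℕ) (h : j ≤ N) :
    coeff (R := ℂ) N (exp ℂ ^ c * X ^ j) = (c:ℂ)^(N - j) / (N - j).factorial := by
  obtain ⟨d, rfl⟩ : ∃ d, N = d + j := ⟨N - j, by omega⟩
  rw [aux_coeff]
  have : d + j - j = d := by omega
  rw [this]

lemma aux_term (N j1 j2 j3 : ℕ) (c1 c2 : ℕ) (h : j2 ≤ N) :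
    coeff (R := ℂ) N ((-1)^j1 * ((-X)^j2 * exp ℂ ^ j3 * (c2 : ℂ⟦X⟧)) * (c1 : ℂ⟦X⟧))
      = (-1)^(j1+j2) * c1 * c2 * (j3:ℂ)^(N - j2) / (N - j2).factorial := by
  have e : ((-1 : ℂ⟦X⟧)^j1 * ((-X)^j2 * exp ℂ ^ j3 * (c2 : ℂ⟦X⟧)) * (c1 : ℂ⟦X⟧))
      = C (R := ℂ) ((-1)^(j1+j2) * c1 * c2) * (exp ℂ ^ j3 * X ^ j2) := by
    rw [neg_pow X, pow_add]
    simp only [map_mul, map_pow, map_neg, map_one, map_natCast]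
    ring
  rw [e, coeff_C_mul, aux_coeff' _ _ _ h]
  ring

lemma part1 (n k : ℕ) :
    dmPoly (fun j => 1 / (Nat.factorial (j+1) : ℂ)) n k =
      ∑ j1 ∈ Finset.range (k+1), ∑ j2 ∈ Finset.range (k+1-j1),
        (Nat.factorial k : ℂ) /
            ((Nat.factorial j1 : ℂ) * (Nat.factorial j2 : ℂ) *
              (Nat.factorial (k-j1-j2) : ℂ)) *
          (-1)^(j1+j2) * ((k-j1-j2 : ℕ) : ℂ)^(n+j1+(k-j1-j2)) /
            (Nat.factorial (n+j1+(k-j1-j2)) : ℂ) := by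
  have h1 : dmPoly (fun j => 1 / (Nat.factorial (j+1) : ℂ)) n k
      = coeff (R := ℂ) (n + k) ((exp ℂ - 1 - X)^k) := by
    rw [dmPoly, ← coeff_mul_X_pow _ k n, ← mul_pow, aux_mk1]
  rw [h1, show exp ℂ - 1 - X = (-1) + (exp ℂ - X) by ring, add_pow, map_sum]
  refine Finset.sum_congr rfl fun j1 hj1 => ?_
  have hj1' : j1 ≤ k := Nat.lt_succ_iff.mp (Finset.mem_range.mp hj1)
  rw [show exp ℂ - X = -X + exp ℂ by ring, add_pow]
  simp only [Finset.mul_sum, Finset.sum_mul, map_sum]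
  rw [show k - j1 + 1 = k + 1 - j1 by omega]
  refine Finset.sum_congr rfl fun j2 hj2 => ?_
  have hj2' : j2 ≤ k - j1 := by have := Finset.mem_range.mp hj2; omega
  rw [aux_term _ _ _ _ _ _ (by omega : j2 ≤ n + k)]
  rw [show n + j1 + (k - j1 - j2) = n + k - j2 by omega]
  have hcc : (k.choose j1 : ℂ) * ((k - j1).choose j2 : ℂ)
      = (k.factorial : ℂ) / ((j1.factorial : ℂ) * (j2.factorial : ℂ) * ((k - j1 - j2).factorial : ℂ)) := by
    have h1 := Nat.choose_mul_factorial_mul_factorial hj1'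
    have h2 := Nat.choose_mul_factorial_mul_factorial hj2'
    have f1 : (j1.factorial : ℂ) ≠ 0 := Nat.cast_ne_zero.mpr (Nat.factorial_ne_zero _)
    have f2 : (j2.factorial : ℂ) ≠ 0 := Nat.cast_ne_zero.mpr (Nat.factorial_ne_zero _)
    have f3 : ((k - j1 - j2).factorial : ℂ) ≠ 0 := Nat.cast_ne_zero.mpr (Nat.factorial_ne_zero _)
    field_simp
    push_cast [← h1, ← h2]
    ring
  rw [← hcc]
  ring

lemma aux_mk2 :
    (PowerSeries.mk fun i => if i = 0 then (0:ℂ) else (1 / (Nat.factorial (i+2) : ℂ))) * X ^ 2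
      = exp ℂ - 1 - X - C (R := ℂ) (1/2) * X ^ 2 := by
  ext n
  match n with
  | 0 => simp [coeff_mul_X_pow', coeff_exp]
  | 1 => simp [coeff_mul_X_pow', coeff_exp, coeff_X]
  | (d+2) =>
    rw [show d + 2 = d + 2 from rfl, coeff_mul_X_pow]
    rcases d with _ | d
    · simp [coeff_exp, coeff_one, coeff_X, Nat.factorial]
    · simp [coeff_exp, coeff_one, coeff_X, coeff_C_mul, coeff_X_pow]

lemma aux_term2 (N j1 j2 j3 j4 : ℕ) (c1 c2 c3 : ℕ) (h : j2 + 2*j3 ≤ N) :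
    coeff (R := ℂ) N ((-1)^j1 * ((-X)^j2 * ((-(C (R := ℂ) (1/2) * X^2))^j3 * exp ℂ ^ j4 * (c3 : ℂ⟦X⟧))
        * (c2 : ℂ⟦X⟧)) * (c1 : ℂ⟦X⟧))
      = (-1)^(j1+j2+j3) / 2^j3 * c1 * c2 * c3 * (j4:ℂ)^(N - (j2+2*j3))
          / (N - (j2+2*j3)).factorial := by
  have e : ((-1 : ℂ⟦X⟧)^j1 * ((-X)^j2 * ((-(C (R := ℂ) (1/2) * X^2))^j3 * exp ℂ ^ j4 * (c3 : ℂ⟦X⟧))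
        * (c2 : ℂ⟦X⟧)) * (c1 : ℂ⟦X⟧))
      = C (R := ℂ) ((-1)^(j1+j2+j3) * (1/2:ℂ)^j3 * c1 * c2 * c3) * (exp ℂ ^ j4 * X ^ (j2+2*j3)) := by
    rw [neg_pow X, neg_pow (C (R := ℂ) (1/2) * X^2), mul_pow, ← pow_mul, pow_add, pow_add]
    simp only [map_mul, map_pow, map_neg, map_one, map_natCast, map_div₀, map_ofNat]
    ring
  rw [e, coeff_C_mul, aux_coeff' _ _ _ (by omega)]
  simp only [one_div, inv_pow]
  ring

lemma part2 (n k : ℕ) :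
    dmPoly (fun j => 1 / (Nat.factorial (j+2) : ℂ)) n k =
      ∑ j1 ∈ Finset.range (k+1), ∑ j2 ∈ Finset.range (k+1-j1),
        ∑ j3 ∈ Finset.range (k+1-j1-j2),
          (Nat.factorial k : ℂ) /
              ((Nat.factorial j1 : ℂ) * (Nat.factorial j2 : ℂ) * (Nat.factorial j3 : ℂ) *
                (Nat.factorial (k-j1-j2-j3) : ℂ)) *
            ((-1)^(j1+j2+j3) / 2^j3) *
            ((k-j1-j2-j3 : ℕ) : ℂ)^(n+2*j1+j2+2*(k-j1-j2-j3)) /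
              (Nat.factorial (n+2*j1+j2+2*(k-j1-j2-j3)) : ℂ) := by
  have h1 : dmPoly (fun j => 1 / (Nat.factorial (j+2) : ℂ)) n k
      = coeff (R := ℂ) (n + 2*k) ((exp ℂ - 1 - X - C (R := ℂ) (1/2) * X ^ 2)^k) := by
    rw [dmPoly, ← coeff_mul_X_pow _ (2*k) n, show X ^ (2*k) = (X^2)^k by rw [← pow_mul],
      ← mul_pow, aux_mk2]
  rw [h1, show exp ℂ - 1 - X - C (R := ℂ) (1/2) * X ^ 2
      = (-1) + (exp ℂ - X - C (R := ℂ) (1/2) * X ^ 2) by ring, add_pow, map_sum]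
  refine Finset.sum_congr rfl fun j1 hj1 => ?_
  have hj1' : j1 ≤ k := Nat.lt_succ_iff.mp (Finset.mem_range.mp hj1)
  rw [show exp ℂ - X - C (R := ℂ) (1/2) * X ^ 2 = -X + (exp ℂ - C (R := ℂ) (1/2) * X ^ 2) by ring, add_pow]
  simp only [Finset.mul_sum, Finset.sum_mul, map_sum]
  rw [show k - j1 + 1 = k + 1 - j1 by omega]
  refine Finset.sum_congr rfl fun j2 hj2 => ?_
  have hj2' : j2 ≤ k - j1 := by have := Finset.mem_range.mp hj2; omega
  rw [show exp ℂ - C (R := ℂ) (1/2) * X ^ 2 = -(C (R := ℂ) (1/2) * X ^ 2) + exp ℂ by ring, add_pow]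
  simp only [Finset.mul_sum, Finset.sum_mul, map_sum]
  rw [show k - j1 - j2 + 1 = k + 1 - j1 - j2 by omega]
  refine Finset.sum_congr rfl fun j3 hj3 => ?_
  have hj3' : j3 ≤ k - j1 - j2 := by have := Finset.mem_range.mp hj3; omega
  rw [aux_term2 _ _ _ _ _ _ _ _ (by omega : j2 + 2*j3 ≤ n + 2*k)]
  rw [show n + 2*j1 + j2 + 2*(k - j1 - j2 - j3) = n + 2*k - (j2 + 2*j3) by omega]
  have hcc : (k.choose j1 : ℂ) * ((k - j1).choose j2 : ℂ) * ((k - j1 - j2).choose j3 : ℂ)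
      = (k.factorial : ℂ) / ((j1.factorial : ℂ) * (j2.factorial : ℂ) * (j3.factorial : ℂ)
          * ((k - j1 - j2 - j3).factorial : ℂ)) := by
    have h1 := Nat.choose_mul_factorial_mul_factorial hj1'
    have h2 := Nat.choose_mul_factorial_mul_factorial hj2'
    have h3 := Nat.choose_mul_factorial_mul_factorial hj3'
    have f1 : (j1.factorial : ℂ) ≠ 0 := Nat.cast_ne_zero.mpr (Nat.factorial_ne_zero _)
    have f2 : (j2.factorial : ℂ) ≠ 0 := Nat.cast_ne_zero.mpr (Nat.factorial_ne_zero _)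
    have f3 : (j3.factorial : ℂ) ≠ 0 := Nat.cast_ne_zero.mpr (Nat.factorial_ne_zero _)
    have f4 : ((k - j1 - j2 - j3).factorial : ℂ) ≠ 0 := Nat.cast_ne_zero.mpr (Nat.factorial_ne_zero _)
    field_simp
    push_cast [← h1, ← h2, ← h3]
    ring
  rw [← hcc]
  ring

end DMHelpers

/-- identities (7.13) and (7.14). The sums over `j_1 + j_2 + j_3 = k`
(resp. `j_1 + j_2 + j_3 + j_4 = k`) are written as nested sums with the last index
determined by the previous ones. Here `0^0 = 1`. -/
theorem dm_factorial_formulas (n k : ℕ) :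
    (dmPoly (fun j => 1 / (Nat.factorial (j+1) : ℂ)) n k =
      ∑ j1 ∈ Finset.range (k+1), ∑ j2 ∈ Finset.range (k+1-j1),
        (Nat.factorial k : ℂ) /
            ((Nat.factorial j1 : ℂ) * (Nat.factorial j2 : ℂ) *
              (Nat.factorial (k-j1-j2) : ℂ)) *
          (-1)^(j1+j2) * ((k-j1-j2 : ℕ) : ℂ)^(n+j1+(k-j1-j2)) /
            (Nat.factorial (n+j1+(k-j1-j2)) : ℂ)) ∧
    (dmPoly (fun j => 1 / (Nat.factorial (j+2) : ℂ)) n k =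
      ∑ j1 ∈ Finset.range (k+1), ∑ j2 ∈ Finset.range (k+1-j1),
        ∑ j3 ∈ Finset.range (k+1-j1-j2),
          (Nat.factorial k : ℂ) /
              ((Nat.factorial j1 : ℂ) * (Nat.factorial j2 : ℂ) * (Nat.factorial j3 : ℂ) *
                (Nat.factorial (k-j1-j2-j3) : ℂ)) *
            ((-1)^(j1+j2+j3) / 2^j3) *
            ((k-j1-j2-j3 : ℕ) : ℂ)^(n+2*j1+j2+2*(k-j1-j2-j3)) /
              (Nat.factorial (n+2*j1+j2+2*(k-j1-j2-j3)) : ℂ)) := by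
  exact ⟨part1 n k, part2 n k⟩
end
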